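/- arXiv:1701.05665 — 2 statements merged into one kernel-verified Lean document; each statement's English description precedes it below -/
import Mathlib

section
/- Consider the linear repetitive process y_k = G₀^k y₀ + ∑_{i=1}^k G₀^{k−i} H x_i(0) where G₀ and H are bounded linear operators on a normed space, and ‖G₀^k‖ ≤ M ζ^k with M ≥ 1, ζ ∈ (0,1). If the initial-state sequence (x_i(0)) has finite e_λ norm for some λ ∈ (0,1), then with λ̄ = max{ζ,λ}, ‖y_k‖ ≤ M·max{1, 2‖H‖/(1−λ̄)} · ((1+λ̄)/2)^k · (‖y₀‖ + ‖x(0)‖_{e_λ}) for all k ∈ ℕ. -/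
/-!
With `λ̄ = max ζ λ` and `S = ‖x(0)‖_{e_λ}`, both `‖G₀ ^ j‖ ≤ M λ̄ ^ j` and `‖x (j + 1)‖ ≤ S λ̄ ^ j`,
so each of the `k` terms of the convolution sum is at most `M ‖H‖ S λ̄ ^ (k - 1)`. The polynomial
factor `k` is absorbed by passing to the slower rate `μ = (1 + λ̄) / 2`: comparing the geometric
sums for `μ ^ k - λ̄ ^ k` and `k λ̄ ^ (k - 1)` term by term gives `k λ̄ ^ (k - 1) (μ - λ̄) ≤ μ ^ k`,
and `μ - λ̄ = (1 - λ̄) / 2`.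
-/

open Finset

lemma natCast_mul_pow_pred_mul_sub_le {R : Type*} [CommRing R] [LinearOrder R]
    [IsStrictOrderedRing R] {a b : R} (hb : 0 ≤ b) (hba : b ≤ a) (k : ℕ) :
    k * b ^ (k - 1) * (a - b) ≤ a ^ k :=
  calc (k : R) * b ^ (k - 1) * (a - b)
      = (∑ i ∈ range k, b ^ i * b ^ (k - 1 - i)) * (a - b) := by rw [geom_sum₂_self]
    _ ≤ (∑ i ∈ range k, a ^ i * b ^ (k - 1 - i)) * (a - b) := by gcongr
    _ = a ^ k - b ^ k := geom_sum₂_mul a b k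
    _ ≤ a ^ k := sub_le_self _ (pow_nonneg hb k)

lemma natCast_mul_pow_pred_le {b : ℝ} (hb₀ : 0 ≤ b) (hb₁ : b < 1) (k : ℕ) :
    k * b ^ (k - 1) ≤ 2 / (1 - b) * ((1 + b) / 2) ^ k := by
  have key := natCast_mul_pow_pred_mul_sub_le hb₀ (by linarith : b ≤ (1 + b) / 2) k
  rw [show (1 + b) / 2 - b = (1 - b) / 2 by ring] at key
  rw [div_mul_eq_mul_div, le_div_iff₀ (by linarith)]
  linarith

lemma norm_sum_Icc_pow_apply_le {𝕜 E Y : Type*} [NontriviallyNormedField 𝕜]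
    [NormedAddCommGroup E] [NormedSpace 𝕜 E] [NormedAddCommGroup Y] [NormedSpace 𝕜 Y]
    (G : Y →L[𝕜] Y) (H : E →L[𝕜] Y) (x : ℕ → E) {M b S : ℝ}
    (hG : ∀ j : ℕ, ‖G ^ j‖ ≤ M * b ^ j) (hx : ∀ j : ℕ, ‖x (j + 1)‖ ≤ S * b ^ j) (k : ℕ) :
    ‖∑ i ∈ Icc 1 k, (G ^ (k - i)) (H (x i))‖ ≤ k * (M * ‖H‖ * S * b ^ (k - 1)) := by
  have hterm : ∀ i ∈ Icc 1 k, ‖(G ^ (k - i)) (H (x i))‖ ≤ M * ‖H‖ * S * b ^ (k - 1) := by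
    intro i hi
    obtain ⟨hi₁, hik⟩ := mem_Icc.mp hi
    have hxi : ‖x i‖ ≤ S * b ^ (i - 1) := by simpa [Nat.sub_add_cancel hi₁] using hx (i - 1)
    calc ‖(G ^ (k - i)) (H (x i))‖ ≤ ‖G ^ (k - i)‖ * (‖H‖ * ‖x i‖) :=
          (G ^ (k - i)).le_opNorm_of_le (H.le_opNorm _)
      _ ≤ M * b ^ (k - i) * (‖H‖ * (S * b ^ (i - 1))) := by
          gcongr
          · exact (norm_nonneg _).trans (hG _)
          · exact hG _
      _ = M * ‖H‖ * S * b ^ (k - i + (i - 1)) := by ring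
      _ = M * ‖H‖ * S * b ^ (k - 1) := by rw [show k - i + (i - 1) = k - 1 by omega]
  calc ‖∑ i ∈ Icc 1 k, (G ^ (k - i)) (H (x i))‖
      ≤ ∑ _i ∈ Icc 1 k, M * ‖H‖ * S * b ^ (k - 1) := norm_sum_le_of_le _ hterm
    _ = k * (M * ‖H‖ * S * b ^ (k - 1)) := by simp

theorem ltv_drp_exponential_stability_bound
    {E Yo : Type*} [NormedAddCommGroup E] [NormedSpace ℝ E]
    [NormedAddCommGroup Yo] [NormedSpace ℝ Yo]
    (G₀ : Yo →L[ℝ] Yo) (H : E →L[ℝ] Yo)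
    (M ζ lam : ℝ) (hM : 1 ≤ M) (hζ : ζ ∈ Set.Ioo (0:ℝ) 1) (hlam : lam ∈ Set.Ioo (0:ℝ) 1)
    (hG : ∀ k : ℕ, ‖G₀ ^ k‖ ≤ M * ζ ^ k)
    (y₀ : Yo) (x : ℕ → E)
    (hbdd : BddAbove (Set.range fun k : ℕ => ‖x (k + 1)‖ / lam ^ k)) :
    ∀ k : ℕ,
      ‖(G₀ ^ k) y₀ + ∑ i ∈ Finset.Icc 1 k, (G₀ ^ (k - i)) (H (x i))‖ ≤
        M * max 1 (2 * ‖H‖ / (1 - max ζ lam)) * ((1 + max ζ lam) / 2) ^ k *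
          (‖y₀‖ + ⨆ k : ℕ, ‖x (k + 1)‖ / lam ^ k) := by
  intro k
  set b := max ζ lam
  set S := ⨆ j : ℕ, ‖x (j + 1)‖ / lam ^ j
  set C := max 1 (2 * ‖H‖ / (1 - b))
  set μ := (1 + b) / 2 with hμ
  have hb₀ : 0 ≤ b := hζ.1.le.trans (le_max_left _ _)
  have hb₁ : b < 1 := max_lt hζ.2 hlam.2
  have hS : 0 ≤ S := (div_nonneg (norm_nonneg _) (pow_nonneg hlam.1.le 0)).trans (le_ciSup hbdd 0)
  have hGb : ∀ j : ℕ, ‖G₀ ^ j‖ ≤ M * b ^ j := fun j =>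
    (hG j).trans (by gcongr; exacts [hζ.1.le, le_max_left _ _])
  have hxb : ∀ j : ℕ, ‖x (j + 1)‖ ≤ S * b ^ j := fun j =>
    ((div_le_iff₀ (pow_pos hlam.1 j)).1 (le_ciSup hbdd j)).trans
      (by gcongr; exacts [hlam.1.le, le_max_right _ _])
  calc ‖(G₀ ^ k) y₀ + ∑ i ∈ Icc 1 k, (G₀ ^ (k - i)) (H (x i))‖
      ≤ M * b ^ k * ‖y₀‖ + k * (M * ‖H‖ * S * b ^ (k - 1)) :=
        (norm_add_le _ _).trans (add_le_add ((G₀ ^ k).le_of_opNorm_le (hGb k) y₀)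
          (norm_sum_Icc_pow_apply_le G₀ H x hGb hxb k))
    _ = M * b ^ k * ‖y₀‖ + M * ‖H‖ * S * (k * b ^ (k - 1)) := by ring
    _ ≤ M * μ ^ k * ‖y₀‖ + M * ‖H‖ * S * (2 / (1 - b) * μ ^ k) := by
        gcongr M * ?_ * ‖y₀‖ + M * ‖H‖ * S * ?_
        · exact pow_le_pow_left₀ hb₀ (by linarith) k
        · exact natCast_mul_pow_pred_le hb₀ hb₁ k
    _ = M * 1 * μ ^ k * ‖y₀‖ + M * (2 * ‖H‖ / (1 - b)) * μ ^ k * S := by ring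
    _ ≤ M * C * μ ^ k * ‖y₀‖ + M * C * μ ^ k * S := by
        gcongr
        exacts [le_max_left _ _, le_max_right _ _]
    _ = M * C * μ ^ k * (‖y₀‖ + S) := by ring
end

section
/- Let F : Y → Y with F(0) = 0 on a normed space Y, and suppose there exist K ≥ 1, γ ∈ (0,1), δ > 0 such that ‖y‖ < δ implies ‖F^k(y)‖ ≤ K γ^k ‖y‖ for all k ∈ ℕ. Then, choosing N ∈ ℕ with K γ^N < 1, the functional V(y) = ∑_{i=0}^{N−1} ‖F^i(y)‖ satisfies, for all y with ‖y‖ < δ: (i) ‖y‖ ≤ V(y) ≤ (K/(1−γ))‖y‖, and (ii) V(F(y)) − V(y) ≤ −(1 − Kγ^N)‖y‖. -/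
/-! The lower bound is the term `‖F^[0] y‖ = ‖y‖` of `V y`, and the upper bound is the
termwise decay estimate summed against the geometric series. Replacing `y` by `F y` shifts the
orbit by one step, so `V (F y) - V y` telescopes to `‖F^[N] y‖ - ‖y‖ ≤ (K γ^N - 1) ‖y‖`. -/

open Finset

namespace Function

variable {Y : Type*}

def lyapunovSum [Norm Y] (F : Y → Y) (N : ℕ) (y : Y) : ℝ :=
  ∑ i ∈ range N, ‖F^[i] y‖

theorem norm_le_lyapunovSum [SeminormedAddGroup Y] (F : Y → Y) {N : ℕ} (hN : 0 < N) (y : Y) :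
    ‖y‖ ≤ lyapunovSum F N y :=
  single_le_sum (f := fun i => ‖F^[i] y‖) (fun _ _ => norm_nonneg _) (mem_range.mpr hN)

theorem lyapunovSum_le [SeminormedAddGroup Y] {F : Y → Y} {K γ : ℝ} (hK : 0 ≤ K)
    (hγ0 : 0 ≤ γ) (hγ1 : γ < 1) {y : Y} (hy : ∀ k, ‖F^[k] y‖ ≤ K * γ ^ k * ‖y‖) (N : ℕ) :
    lyapunovSum F N y ≤ K / (1 - γ) * ‖y‖ :=
  calc lyapunovSum F N y ≤ ∑ i ∈ range N, K * γ ^ i * ‖y‖ := sum_le_sum fun i _ => hy i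
    _ = K * (∑ i ∈ range N, γ ^ i) * ‖y‖ := by rw [mul_sum, sum_mul]
    _ ≤ K * (γ ^ 0 / (1 - γ)) * ‖y‖ := by
      gcongr K * ?_ * _
      rw [range_eq_Ico]
      exact geom_sum_Ico_le_of_lt_one hγ0 hγ1
    _ = K / (1 - γ) * ‖y‖ := by rw [pow_zero, mul_one_div]

theorem lyapunovSum_apply_sub [Norm Y] (F : Y → Y) (N : ℕ) (y : Y) :
    lyapunovSum F N (F y) - lyapunovSum F N y = ‖F^[N] y‖ - ‖y‖ := by
  simp only [lyapunovSum, ← iterate_succ_apply, ← sum_sub_distrib]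
  exact sum_range_sub (fun i => ‖F^[i] y‖) N

end Function

open Function in
theorem converse_lyapunov_construction_general
    {Y : Type*} [NormedAddCommGroup Y]
    (F : Y → Y)
    (K γ δ : ℝ) (hK : 1 ≤ K) (hγ : γ ∈ Set.Ioo (0:ℝ) 1)
    (hstab : ∀ y : Y, ‖y‖ < δ → ∀ k : ℕ, ‖F^[k] y‖ ≤ K * γ ^ k * ‖y‖)
    (N : ℕ) (hN : K * γ ^ N < 1) :
    ∀ y : Y, ‖y‖ < δ →
      (‖y‖ ≤ ∑ i ∈ Finset.range N, ‖F^[i] y‖) ∧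
      (∑ i ∈ Finset.range N, ‖F^[i] y‖ ≤ (K / (1 - γ)) * ‖y‖) ∧
      ((∑ i ∈ Finset.range N, ‖F^[i] (F y)‖) - ∑ i ∈ Finset.range N, ‖F^[i] y‖ ≤
        -(1 - K * γ ^ N) * ‖y‖) := by
  intro y hy
  have hN0 : 0 < N := Nat.pos_of_ne_zero fun h => by rw [h, pow_zero, mul_one] at hN; linarith
  refine ⟨norm_le_lyapunovSum F hN0 y,
    lyapunovSum_le (by linarith) hγ.1.le hγ.2 (hstab y hy) N, ?_⟩
  have hdecay := hstab y hy N
  calc lyapunovSum F N (F y) - lyapunovSum F N y = ‖F^[N] y‖ - ‖y‖ :=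
        lyapunovSum_apply_sub F N y
    _ ≤ -(1 - K * γ ^ N) * ‖y‖ := by linarith

theorem converse_lyapunov_construction
    {Y : Type*} [NormedAddCommGroup Y] [NormedSpace ℝ Y]
    (F : Y → Y) (hF0 : F 0 = 0)
    (K γ δ : ℝ) (hK : 1 ≤ K) (hγ : γ ∈ Set.Ioo (0:ℝ) 1) (hδ : 0 < δ)
    (hstab : ∀ y : Y, ‖y‖ < δ → ∀ k : ℕ, ‖F^[k] y‖ ≤ K * γ ^ k * ‖y‖)
    (N : ℕ) (hN : K * γ ^ N < 1) :
    ∀ y : Y, ‖y‖ < δ →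
      (‖y‖ ≤ ∑ i ∈ Finset.range N, ‖F^[i] y‖) ∧
      (∑ i ∈ Finset.range N, ‖F^[i] y‖ ≤ (K / (1 - γ)) * ‖y‖) ∧
      ((∑ i ∈ Finset.range N, ‖F^[i] (F y)‖) - ∑ i ∈ Finset.range N, ‖F^[i] y‖ ≤
        -(1 - K * γ ^ N) * ‖y‖) :=
  converse_lyapunov_construction_general F K γ δ hK hγ hstab N hN
end
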